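/- Any 2-system derivation 𝒫 can be transformed into a 2-system derivation 𝒫' of the same end-sequent in which no entanglement occurs, i.e., for each pair of 2-system instances in 𝒫' it is not the case that some top rules of the first occur above some top rules of the second while some top rules of the first also occur below some top rules of the second. -/

import Mathlib

/- Formulas of intuitionistic propositional logic -/
inductive Formula : Type
  | atom : ℕ → Formula
  | bot  : Formula
  | conj : Formula → Formula → Formula
  | disj : Formula → Formula → Formula
  | impl : Formula → Formula → Formula

/-- A sequent Γ ⇒ Π. -/
abbrev Sequent : Type := Multiset Formula × Option Formula

/-- A (schematic) top rule of a 2-system: it infers Σ₀, Γ' ⇒ Π' from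
Σ₁, Γ' ⇒ Π', …, Σₙ, Γ' ⇒ Π' for fixed multisets Σ₀, Σ₁, …, Σₙ. -/
structure TopRule : Type where
  concl : Multiset Formula
  prems : List (Multiset Formula)

/-- A two-level system of rules (2-system), given by its top rules. -/
structure TwoSystem : Type where
  tops : List TopRule

/-- The rules of LJ, as a relation between the list of premisses and the
conclusion. -/
inductive LJRule : List Sequent → Sequent → Prop
  | ax (φ : Formula) : LJRule [] ({φ}, some φ)
  | botL (Δ : Option Formula) : LJRule [] ({Formula.bot}, Δ)
  | disjL {Γ : Multiset Formula} {Δ : Option Formula} (φ ψ : Formula) :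
      LJRule [(φ ::ₘ Γ, Δ), (ψ ::ₘ Γ, Δ)] (Formula.disj φ ψ ::ₘ Γ, Δ)
  | disjR1 {Γ : Multiset Formula} (φ ψ : Formula) :
      LJRule [(Γ, some φ)] (Γ, some (Formula.disj φ ψ))
  | disjR2 {Γ : Multiset Formula} (φ ψ : Formula) :
      LJRule [(Γ, some ψ)] (Γ, some (Formula.disj φ ψ))
  | conjL {Γ : Multiset Formula} {Δ : Option Formula} (φ ψ : Formula) :
      LJRule [(φ ::ₘ ψ ::ₘ Γ, Δ)] (Formula.conj φ ψ ::ₘ Γ, Δ)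
  | conjR {Γ : Multiset Formula} (φ ψ : Formula) :
      LJRule [(Γ, some φ), (Γ, some ψ)] (Γ, some (Formula.conj φ ψ))
  | implL {Γ : Multiset Formula} {Δ : Option Formula} (φ ψ : Formula) :
      LJRule [(Γ, some φ), (ψ ::ₘ Γ, Δ)] (Formula.impl φ ψ ::ₘ Γ, Δ)
  | implR {Γ : Multiset Formula} (φ ψ : Formula) :
      LJRule [(φ ::ₘ Γ, some ψ)] (Γ, some (Formula.impl φ ψ))
  | iw {Γ : Multiset Formula} {Δ : Option Formula} (φ : Formula) :
      LJRule [(Γ, Δ)] (φ ::ₘ Γ, Δ)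
  | ic {Γ : Multiset Formula} {Δ : Option Formula} (φ : Formula) :
      LJRule [(φ ::ₘ φ ::ₘ Γ, Δ)] (φ ::ₘ Γ, Δ)
  | cut {Γ Γ' : Multiset Formula} {Δ : Option Formula} (φ : Formula) :
      LJRule [(Γ, some φ), (φ ::ₘ Γ', Δ)] (Γ + Γ', Δ)

/-- Labels of rule applications in a 2-system derivation: an LJ rule, a top
rule application (tagged with the "level" of the bottom rule application it
belongs to, i.e. the number of bottom rules applied below the bottom rule of
its 2-system instance), or a bottom rule application of a 2-system. -/
inductive Lab : Type
  | lj : Lab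
  | top : ℕ → Lab
  | bot : TwoSystem → Lab

/-- Derivation trees: a node carries a label, its conclusion sequent, and
the list of its immediate subderivations. -/
inductive DTree : Type
  | node : Lab → Sequent → List DTree → DTree

def DTree.lab : DTree → Lab
  | .node l _ _ => l

def DTree.concl : DTree → Sequent
  | .node _ s _ => s

def DTree.children : DTree → List DTree
  | .node _ _ ts => ts

/-- `IsDeriv S ctx t` : `t` is a correct derivation in LJ extended with the
2-systems in `S`, where `ctx` lists the top rules enabled at the root
(`ctx.length` is the number of bottom rules applied below, and the top rule
at position `j` of `ctx` belongs to the 2-system instance whose bottom rule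
was the (j+1)-st bottom rule encountered).  A genuine 2-system derivation of
a sequent is a tree `t` with `IsDeriv S [] t`, so that every top rule
application belongs to (occurs above a premiss of) the bottom rule of its
2-system instance. -/
inductive IsDeriv (S : Set TwoSystem) : List TopRule → DTree → Prop
  | lj {ctx : List TopRule} {s : Sequent} {ts : List DTree} :
      LJRule (ts.map DTree.concl) s →
      (∀ u ∈ ts, IsDeriv S ctx u) →
      IsDeriv S ctx (DTree.node Lab.lj s ts)
  | top {ctx : List TopRule} (j : ℕ) (hj : j < ctx.length)
      (Γ' : Multiset Formula) (Δ' : Option Formula) {ts : List DTree} :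
      ts.map DTree.concl = (ctx.get ⟨j, hj⟩).prems.map (fun p => (p + Γ', Δ')) →
      (∀ u ∈ ts, IsDeriv S ctx u) →
      IsDeriv S ctx (DTree.node (Lab.top j) ((ctx.get ⟨j, hj⟩).concl + Γ', Δ') ts)
  | bot {ctx : List TopRule} (sys : TwoSystem) (hs : sys ∈ S)
      {s : Sequent} {ts : List DTree} :
      ts.length = sys.tops.length →
      (∀ u ∈ ts, u.concl = s) →
      (∀ p ∈ ts.zip sys.tops, IsDeriv S (ctx ++ [p.2]) p.1) →
      IsDeriv S ctx (DTree.node (Lab.bot sys) s ts)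

/-- `Subtree u t` : `u` occurs as a subtree of `t`. -/
inductive Subtree : DTree → DTree → Prop
  | refl (t : DTree) : Subtree t t
  | child {u v : DTree} {l : Lab} {s : Sequent} {ts : List DTree} :
      u ∈ ts → Subtree v u → Subtree v (DTree.node l s ts)

attribute [local instance] Classical.propDecidable

/-- `SubtreeAt t p u` : `u` is the subtree of `t` at position `p` (a list of
child indices read from the root). -/
inductive SubtreeAt : DTree → List ℕ → DTree → Prop
  | nil (t : DTree) : SubtreeAt t [] t
  | cons {l : Lab} {s : Sequent} {ts : List DTree} {i : ℕ} {u v : DTree} {p : List ℕ} :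
      ts[i]? = some u → SubtreeAt u p v → SubtreeAt (DTree.node l s ts) (i :: p) v

/-- There is a top rule application with level tag `j` at position `p`. -/
def IsTopAt (t : DTree) (p : List ℕ) (j : ℕ) : Prop :=
  ∃ u : DTree, SubtreeAt t p u ∧ u.lab = Lab.top j

/-- There is a bottom rule application at position `p`. -/
def IsBotAt (t : DTree) (p : List ℕ) : Prop :=
  ∃ (u : DTree) (sys : TwoSystem), SubtreeAt t p u ∧ u.lab = Lab.bot sys

/-- The number of bottom rule applications strictly below position `p`
(i.e. at proper prefixes of `p`); in a correct derivation this is the level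
of the 2-system instance whose bottom rule is applied at `p`. -/
noncomputable def botCount (t : DTree) (p : List ℕ) : ℕ :=
  ((Finset.range p.length).filter (fun k => IsBotAt t (p.take k))).card

/-- The top rule application at position `p` belongs to the 2-system
instance whose bottom rule is applied at position `q`: `q` is a proper
prefix of `p`, a bottom rule is applied at `q`, and the level tag of the top
rule application at `p` equals the level of that bottom rule. -/
def BelongsTo (t : DTree) (p q : List ℕ) : Prop :=
  ∃ j : ℕ, IsTopAt t p j ∧ q <+: p ∧ q ≠ p ∧ IsBotAt t q ∧ botCount t q = j

/-- Two 2-system instances (identified by the positions `q₁`, `q₂` of their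
bottom rules) are entangled: some top rules of the first occur above some
top rules of the second, and some top rules of the first occur below some
top rules of the second.  (Position `p₁` is above position `p₂` iff `p₂` is
a proper prefix of `p₁`.) -/
def Entangled (t : DTree) (q₁ q₂ : List ℕ) : Prop :=
  q₁ ≠ q₂ ∧
    (∃ p₁ p₂ : List ℕ, BelongsTo t p₁ q₁ ∧ BelongsTo t p₂ q₂ ∧ p₂ <+: p₁ ∧ p₂ ≠ p₁) ∧
    (∃ p₁ p₂ : List ℕ, BelongsTo t p₁ q₁ ∧ BelongsTo t p₂ q₂ ∧ p₁ <+: p₂ ∧ p₁ ≠ p₂)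
namespace Disent

/-- Trees with no 2-system rule applications at all. -/
inductive NoSys : DTree → Prop
  | mk {s : Sequent} {ts : List DTree} :
      (∀ u ∈ ts, NoSys u) → NoSys (DTree.node Lab.lj s ts)

/-- Structural safety relative to `n` bottom rules below the root. -/
inductive Safe : ℕ → DTree → Prop
  | lj {n : ℕ} {s : Sequent} {ts : List DTree} :
      (∀ u ∈ ts, Safe n u) → Safe n (DTree.node Lab.lj s ts)
  | bot {n : ℕ} {sys : TwoSystem} {s : Sequent} {ts : List DTree} :
      (∀ u ∈ ts, Safe (n+1) u) → Safe n (DTree.node (Lab.bot sys) s ts)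
  | top {n j : ℕ} {s : Sequent} {ts : List DTree} :
      j + 1 = n → (∀ u ∈ ts, NoSys u) → Safe n (DTree.node (Lab.top j) s ts)

lemma noSys_lab {w : DTree} (h : NoSys w) : w.lab = Lab.lj := by
  cases h; rfl

lemma subtreeAt_unique : ∀ {t : DTree} {p : List ℕ} {u v : DTree},
    SubtreeAt t p u → SubtreeAt t p v → u = v := by
  intro t p u v h1 h2
  induction h1 generalizing v with
  | nil => cases h2; rfl
  | cons hget hsub ih =>
    cases h2 with
    | cons hget2 hsub2 =>
      rw [hget] at hget2
      injection hget2 with h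
      subst h
      exact ih hsub2

lemma subtreeAt_prefix : ∀ {t : DTree} {p : List ℕ} {v : DTree},
    SubtreeAt t p v → ∀ {q : List ℕ}, q <+: p → ∃ u, SubtreeAt t q u := by
  intro t p v h
  induction h with
  | nil t =>
    intro q hq
    rw [List.prefix_nil.mp hq]
    exact ⟨t, .nil t⟩
  | @cons l s ts i u v p hget hsub ih =>
    intro q hq
    rcases q with _ | ⟨j, q'⟩
    · exact ⟨_, .nil _⟩
    · obtain ⟨w, hw⟩ := hq
      rw [List.cons_append] at hw
      injection hw with h1 h2
      subst h1
      obtain ⟨u', hu'⟩ := ih ⟨w, h2⟩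
      exact ⟨u', .cons hget hu'⟩

lemma subtreeAt_decomp : ∀ {t : DTree} {p : List ℕ} {u : DTree},
    SubtreeAt t p u → ∀ {w : List ℕ} {v : DTree}, SubtreeAt t (p ++ w) v → SubtreeAt u w v := by
  intro t p u h2
  induction h2 with
  | nil t => intro w v h1; exact h1
  | @cons l s ts i u₀ u p' hget hsub ih =>
    intro w v h1
    rw [List.cons_append] at h1
    cases h1 with
    | cons hget2 hsub2 =>
      rw [hget] at hget2
      injection hget2 with h
      subst h
      exact ih hsub2

lemma isBotAt_cons {l : Lab} {s : Sequent} {ts : List DTree} {i : ℕ} {u : DTree}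
    (h : ts[i]? = some u) (w : List ℕ) :
    IsBotAt (DTree.node l s ts) (i :: w) ↔ IsBotAt u w := by
  constructor
  · rintro ⟨v, sys, hsub, hlab⟩
    cases hsub with
    | cons hget2 hsub2 =>
      rw [h] at hget2
      injection hget2 with h2
      subst h2
      exact ⟨v, sys, hsub2, hlab⟩
  · rintro ⟨v, sys, hsub, hlab⟩
    exact ⟨v, sys, .cons h hsub, hlab⟩

lemma isBotAt_nil {l : Lab} {s : Sequent} {ts : List DTree} :
    IsBotAt (DTree.node l s ts) [] ↔ ∃ sys, l = Lab.bot sys := by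
  constructor
  · rintro ⟨u, sys, hsub, hlab⟩
    cases hsub
    exact ⟨sys, hlab⟩
  · rintro ⟨sys, rfl⟩
    exact ⟨_, sys, .nil _, rfl⟩

lemma botCount_nil (t : DTree) : botCount t [] = 0 := by
  simp [botCount]

lemma card_filter_range_succ (n : ℕ) (K : ℕ → Prop) :
    ((Finset.range (n+1)).filter K).card
      = ((Finset.range n).filter (fun k => K (k+1))).card + (if K 0 then 1 else 0) := by
  rw [Finset.card_filter, Finset.card_filter, Finset.sum_range_succ']

lemma botCount_cons {l : Lab} {s : Sequent} {ts : List DTree} {i : ℕ} {u : DTree}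
    (h : ts[i]? = some u) (p : List ℕ) :
    botCount (DTree.node l s ts) (i :: p)
      = botCount u p + (if IsBotAt (DTree.node l s ts) [] then 1 else 0) := by
  show ((Finset.range (p.length + 1)).filter _).card = _
  rw [card_filter_range_succ]
  congr 1
  · unfold botCount
    congr 1
    apply Finset.filter_congr
    intro k _
    simp only [List.take_succ_cons, isBotAt_cons h, eq_iff_iff]

lemma botCount_lt {t : DTree} {q : List ℕ} (w : List ℕ) (hw : w ≠ []) (hb : IsBotAt t q) :
    botCount t q < botCount t (q ++ w) := by
  classical
  have hlen : q.length < (q ++ w).length := by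
    rw [List.length_append]
    have := List.length_pos_iff.mpr hw
    omega
  have h1 : (Finset.range q.length).filter (fun k => IsBotAt t ((q ++ w).take k))
      = (Finset.range q.length).filter (fun k => IsBotAt t (q.take k)) := by
    apply Finset.filter_congr
    intro k hk
    rw [Finset.mem_range] at hk
    rw [List.take_append_of_le_length (le_of_lt hk)]
  have h2 : insert q.length ((Finset.range q.length).filter (fun k => IsBotAt t ((q ++ w).take k)))
      ⊆ (Finset.range (q ++ w).length).filter (fun k => IsBotAt t ((q ++ w).take k)) := by
    intro x hx
    rcases Finset.mem_insert.mp hx with rfl | hx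
    · rw [Finset.mem_filter, Finset.mem_range]
      refine ⟨hlen, ?_⟩
      rw [List.take_left]
      exact hb
    · rw [Finset.mem_filter] at hx ⊢
      rw [Finset.mem_range] at hx ⊢
      exact ⟨lt_trans hx.1 hlen, hx.2⟩
  have h3 : q.length ∉ (Finset.range q.length).filter (fun k => IsBotAt t ((q ++ w).take k)) := by
    simp [Finset.mem_filter]
  calc botCount t q = ((Finset.range q.length).filter (fun k => IsBotAt t ((q ++ w).take k))).card := by
        unfold botCount; rw [h1]
    _ < (insert q.length ((Finset.range q.length).filter (fun k => IsBotAt t ((q ++ w).take k)))).card := by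
        rw [Finset.card_insert_of_notMem h3]; omega
    _ ≤ botCount t (q ++ w) := Finset.card_le_card h2

lemma noSys_subtreeAt : ∀ {p : List ℕ} {w u : DTree}, SubtreeAt w p u → NoSys w → NoSys u := by
  intro p w u hs
  induction hs with
  | nil => exact id
  | cons hget hsub ih =>
    intro h
    cases h with
    | mk hts => exact ih (hts _ (List.mem_of_getElem? hget))

lemma safe_walk : ∀ {p : List ℕ} {t u : DTree}, SubtreeAt t p u → ∀ {n : ℕ}, Safe n t →
    NoSys u ∨ (∃ m, Safe m u ∧ n + botCount t p = m) := by
  intro p t u hs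
  induction hs with
  | nil t => intro n hn; right; exact ⟨n, hn, by rw [botCount_nil]; omega⟩
  | @cons l s ts i u₀ v p' hget hsub ih =>
    intro n hn
    cases hn with
    | lj hts =>
      rcases ih (hts _ (List.mem_of_getElem? hget)) with h | ⟨m, hm, he⟩
      · exact Or.inl h
      · refine Or.inr ⟨m, hm, ?_⟩
        rw [botCount_cons hget]
        have : ¬ IsBotAt (DTree.node Lab.lj s ts) [] := by
          rw [isBotAt_nil]; rintro ⟨sys, h⟩; cases h
        rw [if_neg this]
        omega
    | @bot n sys s ts hts =>
      rcases ih (hts _ (List.mem_of_getElem? hget)) with h | ⟨m, hm, he⟩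
      · exact Or.inl h
      · refine Or.inr ⟨m, hm, ?_⟩
        rw [botCount_cons hget]
        have : IsBotAt (DTree.node (Lab.bot sys) s ts) [] := by
          rw [isBotAt_nil]; exact ⟨sys, rfl⟩
        rw [if_pos this]
        omega
    | top hj hts =>
      exact Or.inl (noSys_subtreeAt hsub (hts _ (List.mem_of_getElem? hget)))

lemma safe_isTopAt {t : DTree} {p : List ℕ} {j : ℕ} (h : Safe 0 t) (ht : IsTopAt t p j) :
    botCount t p = j + 1 := by
  obtain ⟨u, hsub, hlab⟩ := ht
  rcases safe_walk hsub h with hns | ⟨m, hm, he⟩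
  · rw [noSys_lab hns] at hlab; cases hlab
  · cases hm with
    | lj _ => cases hlab
    | bot _ => cases hlab
    | top hj _ =>
      injection hlab with h2
      subst h2
      omega

lemma safe_no_bot_above {t : DTree} {p : List ℕ} {j : ℕ} (h : Safe 0 t) (ht : IsTopAt t p j)
    {w : List ℕ} (hw : w ≠ []) : ¬ IsBotAt t (p ++ w) := by
  rintro ⟨v, sys, hsubv, hlabv⟩
  obtain ⟨u, hsub, hlab⟩ := ht
  have hsv : SubtreeAt u w v := subtreeAt_decomp hsub hsubv
  rcases safe_walk hsub h with hns | ⟨m, hm, _⟩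
  · rw [noSys_lab hns] at hlab; cases hlab
  · cases hm with
    | lj _ => cases hlab
    | bot _ => cases hlab
    | top hj hts =>
      cases hsv with
      | nil => exact hw rfl
      | cons hget hsub' =>
        have := noSys_lab (noSys_subtreeAt hsub' (hts _ (List.mem_of_getElem? hget)))
        rw [this] at hlabv
        cases hlabv

lemma lab_clash {t : DTree} {p : List ℕ} {j : ℕ} (h1 : IsTopAt t p j) (h2 : IsBotAt t p) : False := by
  obtain ⟨u, hsub, hlab⟩ := h1
  obtain ⟨v, sys, hsubv, hlabv⟩ := h2
  rw [subtreeAt_unique hsub hsubv] at hlab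
  rw [hlab] at hlabv
  cases hlabv

lemma belongs_step {t : DTree} (h : Safe 0 t) {p₁ q₁ p₂ q₂ : List ℕ}
    (B1 : BelongsTo t p₁ q₁) (B2 : BelongsTo t p₂ q₂) (hpp : p₂ <+: p₁) (hne : q₁ ≠ q₂) :
    q₁ <+: q₂ := by
  obtain ⟨j₁, hT1, hq1p, hq1ne, hB1, hbc1⟩ := B1
  obtain ⟨j₂, hT2, hq2p, hq2ne, hB2, hbc2⟩ := B2
  rcases List.prefix_or_prefix_of_prefix hq1p hpp with hqp | hpq
  · -- q₁ <+: p₂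
    have hne2 : q₁ ≠ p₂ := by
      rintro rfl
      exact lab_clash hT2 hB1
    have h1 : botCount t q₁ < botCount t p₂ := by
      obtain ⟨w, rfl⟩ := hqp
      have hw : w ≠ [] := by rintro rfl; simp at hne2
      exact botCount_lt w hw hB1
    rw [safe_isTopAt h hT2, hbc1] at h1
    rcases List.prefix_or_prefix_of_prefix hqp hq2p with hq | hq
    · exact hq
    · exfalso
      have hne3 : q₂ ≠ q₁ := hne.symm
      have h2 : botCount t q₂ < botCount t q₁ := by
        obtain ⟨w, rfl⟩ := hq
        have hw : w ≠ [] := by rintro rfl; simp at hne3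
        exact botCount_lt w hw hB2
      rw [hbc1, hbc2] at h2
      omega
  · -- p₂ <+: q₁
    exfalso
    by_cases he : p₂ = q₁
    · exact lab_clash hT2 (he ▸ hB1)
    · obtain ⟨w, rfl⟩ := hpq
      have hw : w ≠ [] := by rintro rfl; simp at he
      exact safe_no_bot_above h hT2 hw hB1

theorem safe_not_entangled {t : DTree} (h : Safe 0 t) (q₁ q₂ : List ℕ) :
    ¬ Entangled t q₁ q₂ := by
  rintro ⟨hne, ⟨p₁, p₂, B1, B2, hpp, _⟩, ⟨p₁', p₂', B1', B2', hpp', _⟩⟩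
  have h12 : q₁ <+: q₂ := belongs_step h B1 B2 hpp hne
  have h21 : q₂ <+: q₁ := belongs_step h B2' B1' hpp' hne.symm
  exact hne (h12.eq_of_length (Nat.le_antisymm h12.length_le h21.length_le))

end Disent
namespace Disent

/-! ### Formula gadgets -/

inductive TagsGE : ℕ → DTree → Prop
  | mk {m : ℕ} {l : Lab} {s : Sequent} {ts : List DTree} :
      (∀ j, l = Lab.top j → m ≤ j) → (∀ u ∈ ts, TagsGE m u) → TagsGE m (DTree.node l s ts)

def conjOf : List Formula → Formula
  | [] => Formula.impl Formula.bot Formula.bot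
  | φ :: L => Formula.conj φ (conjOf L)

def disjOf : List Formula → Formula
  | [] => Formula.bot
  | φ :: L => Formula.disj φ (disjOf L)

noncomputable def DOf (r : TopRule) : Formula :=
  disjOf (r.prems.map (fun m => conjOf m.toList))

noncomputable def FOf (r : TopRule) : Formula :=
  Formula.impl (conjOf r.concl.toList) (DOf r)

lemma msAddCons (a : Formula) (s t : Multiset Formula) : s + (a ::ₘ t) = a ::ₘ (s + t) := by
  rw [add_comm, Multiset.cons_add, add_comm]

lemma mem_single {P : DTree → Prop} {a : DTree} (ha : P a) : ∀ u ∈ [a], P u := by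
  intro u hu; rw [List.mem_singleton] at hu; rw [hu]; exact ha

lemma mem_pair {P : DTree → Prop} {a b : DTree} (ha : P a) (hb : P b) : ∀ u ∈ [a, b], P u := by
  intro u hu
  rw [List.mem_cons, List.mem_singleton] at hu
  rcases hu with rfl | rfl
  · exact ha
  · exact hb

/-! ### Counting bottom rules and size -/

mutual
def nb : DTree → ℕ
  | .node l _ ts => (match l with | .bot _ => 1 | _ => 0) + nbL ts
def nbL : List DTree → ℕ
  | [] => 0
  | t :: ts => nb t + nbL ts
end

mutual
def sz : DTree → ℕ
  | .node _ _ ts => 1 + szL ts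
def szL : List DTree → ℕ
  | [] => 0
  | t :: ts => sz t + szL ts
end

lemma nb_lj (s : Sequent) (ts : List DTree) : nb (DTree.node Lab.lj s ts) = nbL ts := by
  simp [nb]

lemma nb_top (j : ℕ) (s : Sequent) (ts : List DTree) :
    nb (DTree.node (Lab.top j) s ts) = nbL ts := by
  simp [nb]

lemma nb_bot (sys : TwoSystem) (s : Sequent) (ts : List DTree) :
    nb (DTree.node (Lab.bot sys) s ts) = 1 + nbL ts := by
  simp [nb]

lemma nbL_mem {u : DTree} : ∀ {ts : List DTree}, u ∈ ts → nb u ≤ nbL ts := by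
  intro ts
  induction ts with
  | nil => intro h; cases h
  | cons t ts ih =>
    intro h
    rcases List.mem_cons.mp h with rfl | h
    · show nb u ≤ nb u + nbL ts; omega
    · show nb u ≤ nb t + nbL ts; have := ih h; omega

lemma szL_mem {u : DTree} : ∀ {ts : List DTree}, u ∈ ts → sz u ≤ szL ts := by
  intro ts
  induction ts with
  | nil => intro h; cases h
  | cons t ts ih =>
    intro h
    rcases List.mem_cons.mp h with rfl | h
    · show sz u ≤ sz u + szL ts; omega
    · show sz u ≤ sz t + szL ts; have := ih h; omega

lemma sz_node (l : Lab) (s : Sequent) (ts : List DTree) :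
    sz (DTree.node l s ts) = 1 + szL ts := by
  simp [sz]

/-! ### Basic facts about the predicates -/

lemma noSys_tagsGE {t : DTree} (h : NoSys t) (m : ℕ) : TagsGE m t := by
  induction h with
  | mk _ ih => exact TagsGE.mk (fun j hj => by cases hj) ih

lemma noSys_safe {t : DTree} (h : NoSys t) (n : ℕ) : Safe n t := by
  induction h with
  | mk _ ih => exact Safe.lj ih

lemma nbL_zero {ts : List DTree} (h : ∀ u ∈ ts, nb u = 0) : nbL ts = 0 := by
  induction ts with
  | nil => rfl
  | cons t ts ih =>
    show nb t + nbL ts = 0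
    have h1 := h t (by simp)
    have h2 := ih (fun u hu => h u (by simp [hu]))
    omega

lemma noSys_nb {t : DTree} (h : NoSys t) : nb t = 0 := by
  induction h with
  | @mk s ts _ ih => rw [nb_lj]; exact nbL_zero ih

/-! ### Pure LJ derivation builders -/

variable {S : Set TwoSystem}

lemma exists_ax (φ : Formula) (Γ : Multiset Formula) :
    ∃ t : DTree, t.concl = (φ ::ₘ Γ, some φ) ∧ NoSys t ∧ ∀ C, IsDeriv S C t := by
  induction Γ using Multiset.induction with
  | empty =>
    refine ⟨DTree.node Lab.lj ({φ}, some φ) [], rfl, NoSys.mk (by simp), fun C => ?_⟩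
    exact IsDeriv.lj (LJRule.ax φ) (by simp)
  | cons a Γ ih =>
    obtain ⟨t, hc, hn, hd⟩ := ih
    refine ⟨DTree.node Lab.lj (φ ::ₘ a ::ₘ Γ, some φ) [t], rfl,
      NoSys.mk (mem_single hn), fun C => ?_⟩
    apply IsDeriv.lj _ (mem_single (hd C))
    show LJRule [t.concl] _
    rw [hc, Multiset.cons_swap]
    exact LJRule.iw a

lemma exists_conjIntro (L : List Formula) (Γ : Multiset Formula) :
    ∃ t : DTree, t.concl = ((L : Multiset Formula) + Γ, some (conjOf L)) ∧ NoSys t ∧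
      ∀ C, IsDeriv S C t := by
  induction L generalizing Γ with
  | nil =>
    obtain ⟨c, hc, hn, hd⟩ := exists_ax (S := S) Formula.bot Γ
    refine ⟨DTree.node Lab.lj ((([] : List Formula) : Multiset Formula) + Γ, some (conjOf []))
      [c], rfl, NoSys.mk (mem_single hn), fun C => ?_⟩
    apply IsDeriv.lj _ (mem_single (hd C))
    show LJRule [c.concl] _
    rw [hc]
    have h0 : ((([] : List Formula) : Multiset Formula) + Γ) = Γ := by simp
    rw [h0]
    exact LJRule.implR Formula.bot Formula.bot
  | cons φ L ih =>
    obtain ⟨c1, hc1, hn1, hd1⟩ := exists_ax (S := S) φ ((L : Multiset Formula) + Γ)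
    obtain ⟨c2, hc2, hn2, hd2⟩ := ih (φ ::ₘ Γ)
    refine ⟨DTree.node Lab.lj (((φ :: L : List Formula) : Multiset Formula) + Γ,
        some (conjOf (φ :: L))) [c1, c2], rfl,
      NoSys.mk (mem_pair hn1 hn2), fun C => ?_⟩
    apply IsDeriv.lj _ (mem_pair (hd1 C) (hd2 C))
    show LJRule [c1.concl, c2.concl] _
    have h1 : ((φ :: L : List Formula) : Multiset Formula) + Γ
        = φ ::ₘ ((L : Multiset Formula) + Γ) := by
      rw [← Multiset.cons_coe, Multiset.cons_add]
    have h2 : ((L : Multiset Formula) + (φ ::ₘ Γ)) = φ ::ₘ ((L : Multiset Formula) + Γ) :=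
      msAddCons φ _ Γ
    rw [hc1, hc2, h1, h2]
    exact LJRule.conjR φ (conjOf L)

lemma exists_disjSel {α : Type} (f : α → Formula) (Γ : Multiset Formula) :
    ∀ (P : List α) (a : α), a ∈ P → ∀ t : DTree, t.concl = (Γ, some (f a)) →
      NoSys t → (∀ C, IsDeriv S C t) →
      ∃ t' : DTree, t'.concl = (Γ, some (disjOf (P.map f))) ∧ NoSys t' ∧ ∀ C, IsDeriv S C t' := by
  intro P
  induction P with
  | nil => intro a ha; cases ha
  | cons b P ih =>
    intro a ha t hc hn hd
    rcases List.mem_cons.mp ha with rfl | ha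
    · refine ⟨DTree.node Lab.lj (Γ, some (disjOf ((a :: P).map f))) [t], rfl,
        NoSys.mk (mem_single hn), fun C => ?_⟩
      apply IsDeriv.lj _ (mem_single (hd C))
      show LJRule [t.concl] _
      rw [hc]
      exact LJRule.disjR1 (f a) (disjOf (P.map f))
    · obtain ⟨t', hc', hn', hd'⟩ := ih a ha t hc hn hd
      refine ⟨DTree.node Lab.lj (Γ, some (disjOf ((b :: P).map f))) [t'], rfl,
        NoSys.mk (mem_single hn'), fun C => ?_⟩
      apply IsDeriv.lj _ (mem_single (hd' C))
      show LJRule [t'.concl] _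
      rw [hc']
      exact LJRule.disjR2 (f b) (disjOf (P.map f))

/-- Premiss derivations of the single top rule application: `Σₘ ⇒ D_r`. -/
lemma exists_topPrem (r : TopRule) (m : Multiset Formula) (hm : m ∈ r.prems) :
    ∃ t : DTree, t.concl = (m, some (DOf r)) ∧ NoSys t ∧ ∀ C, IsDeriv S C t := by
  obtain ⟨t, hc, hn, hd⟩ := exists_conjIntro (S := S) m.toList 0
  have hc' : t.concl = (m, some (conjOf m.toList)) := by
    rw [hc]; congr 1; simp
  exact exists_disjSel (fun x : Multiset Formula => conjOf x.toList) m r.prems m hm t hc' hn hd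

end Disent
namespace Disent

variable {S : Set TwoSystem}

/-- `t'` is obtained from `t` by wrapping with pure LJ inferences. -/
structure Wrap (S : Set TwoSystem) (C : List TopRule) (t t' : DTree) : Prop where
  deriv : IsDeriv S C t → IsDeriv S C t'
  tags : ∀ m, TagsGE m t → TagsGE m t'
  safe : ∀ n, Safe n t → Safe n t'
  nb_le : nb t' ≤ nb t

lemma Wrap.refl (C : List TopRule) (t : DTree) : Wrap S C t t :=
  ⟨id, fun _ => id, fun _ => id, le_refl _⟩

lemma Wrap.trans {C : List TopRule} {t t' t'' : DTree}
    (h1 : Wrap S C t t') (h2 : Wrap S C t' t'') : Wrap S C t t'' :=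
  ⟨h2.deriv ∘ h1.deriv, fun m => h2.tags m ∘ h1.tags m, fun n => h2.safe n ∘ h1.safe n,
    le_trans h2.nb_le h1.nb_le⟩

lemma Wrap.step {C : List TopRule} {t t' : DTree} (h : Wrap S C t t')
    (s : Sequent) (hr : LJRule [t'.concl] s) : Wrap S C t (DTree.node Lab.lj s [t']) := by
  refine ⟨fun hd => IsDeriv.lj ?_ (mem_single (h.deriv hd)), fun m hm => ?_, fun n hn => ?_, ?_⟩
  · exact hr
  · exact TagsGE.mk (fun j hj => by cases hj) (mem_single (h.tags m hm))
  · exact Safe.lj (mem_single (h.safe n hn))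
  · rw [nb_lj]
    show nb t' + nbL [] ≤ _
    have := h.nb_le
    simp only [nbL]
    omega

lemma exists_iw (C : List TopRule) (Ξ : Multiset Formula) (t : DTree) :
    ∃ t' : DTree, t'.concl = (Ξ + t.concl.1, t.concl.2) ∧ Wrap S C t t' := by
  induction Ξ using Multiset.induction with
  | empty => exact ⟨t, by simp, Wrap.refl C t⟩
  | cons a Ξ ih =>
    obtain ⟨t', hc, w⟩ := ih
    refine ⟨DTree.node Lab.lj (a ::ₘ (Ξ + t.concl.1), t.concl.2) [t'],
      by show (_, _) = _; rw [Multiset.cons_add], ?_⟩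
    apply w.step
    rw [hc]
    exact LJRule.iw a

lemma exists_absorb (C : List TopRule) :
    ∀ (L : List Formula) (Γ : Multiset Formula) (Δ : Option Formula) (t : DTree),
      t.concl = ((L : Multiset Formula) + Γ, Δ) →
      ∃ t' : DTree, t'.concl = (conjOf L ::ₘ Γ, Δ) ∧ Wrap S C t t' := by
  intro L
  induction L with
  | nil =>
    intro Γ Δ t hc
    refine ⟨DTree.node Lab.lj (conjOf [] ::ₘ Γ, Δ) [t], rfl, ?_⟩
    apply (Wrap.refl C t).step
    rw [hc]
    have h0 : ((([] : List Formula) : Multiset Formula) + Γ) = Γ := by simp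
    rw [h0]
    exact LJRule.iw (conjOf [])
  | cons φ L ih =>
    intro Γ Δ t hc
    have hc' : t.concl = ((L : Multiset Formula) + (φ ::ₘ Γ), Δ) := by
      rw [hc, msAddCons, ← Multiset.cons_add, Multiset.cons_coe]
    obtain ⟨t1, hc1, w1⟩ := ih (φ ::ₘ Γ) Δ t hc'
    refine ⟨DTree.node Lab.lj (conjOf (φ :: L) ::ₘ Γ, Δ) [t1], rfl, ?_⟩
    apply w1.step
    rw [hc1, Multiset.cons_swap]
    exact LJRule.conjL φ (conjOf L)

/-- Helper to pick lists of trees satisfying a pointwise property. -/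
lemma exists_treeList {α : Type} (Q : α → DTree → Prop) :
    ∀ (l : List α), (∀ a ∈ l, ∃ e, Q a e) →
      ∃ es : List DTree, es.length = l.length ∧ ∀ pr ∈ l.zip es, Q pr.1 pr.2 := by
  intro l
  induction l with
  | nil => intro _; exact ⟨[], rfl, by intro pr hpr; cases hpr⟩
  | cons a l ih =>
    intro h
    obtain ⟨e, he⟩ := h a (by simp)
    obtain ⟨es, hlen, hes⟩ := ih (fun b hb => h b (by simp [hb]))
    refine ⟨e :: es, by simp [hlen], ?_⟩
    intro pr hpr
    rcases List.mem_cons.mp hpr with rfl | hpr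
    · exact he
    · exact hes pr hpr

lemma map_eq_of_zip {α : Type} {l : List α} :
    ∀ {es : List DTree}, es.length = l.length → (g : DTree → Sequent) → (f : α → Sequent) →
      (∀ pr ∈ l.zip es, g pr.2 = f pr.1) → es.map g = l.map f := by
  induction l with
  | nil => intro es hlen _ _ _; rw [List.length_nil, List.length_eq_zero_iff] at hlen; rw [hlen]; rfl
  | cons a l ih =>
    intro es hlen g f h
    cases es with
    | nil => simp at hlen
    | cons e es =>
      simp only [List.length_cons, Nat.succ.injEq] at hlen
      simp only [List.map_cons]
      rw [h (a, e) (by simp [List.zip_cons_cons]), ih hlen g f (fun pr hpr => h pr (by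
        simp only [List.zip_cons_cons, List.mem_cons]; exact Or.inr hpr))]

lemma exists_zip_left {α : Type} {u : DTree} :
    ∀ {l : List α} {es : List DTree}, es.length = l.length → u ∈ es →
      ∃ a, (a, u) ∈ l.zip es := by
  intro l
  induction l with
  | nil => intro es hlen hu; rw [List.length_nil, List.length_eq_zero_iff] at hlen; subst hlen; cases hu
  | cons a l ih =>
    intro es hlen hu
    cases es with
    | nil => cases hu
    | cons e es =>
      simp only [List.length_cons, Nat.succ.injEq] at hlen
      rcases List.mem_cons.mp hu with rfl | hu
      · exact ⟨a, by simp [List.zip_cons_cons]⟩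
      · obtain ⟨b, hb⟩ := ih hlen hu
        exact ⟨b, by simp only [List.zip_cons_cons, List.mem_cons]; exact Or.inr hb⟩

lemma nbL_le_of_zip : ∀ {ts es : List DTree}, es.length = ts.length →
    (∀ pr ∈ ts.zip es, nb pr.2 ≤ nb pr.1) → nbL es ≤ nbL ts := by
  intro ts
  induction ts with
  | nil => intro es hlen _; rw [List.length_nil, List.length_eq_zero_iff] at hlen; subst hlen; rfl
  | cons t ts ih =>
    intro es hlen h
    cases es with
    | nil => simp [nbL]
    | cons e es =>
      simp only [List.length_cons, Nat.succ.injEq] at hlen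
      show nb e + nbL es ≤ nb t + nbL ts
      have h1 : nb e ≤ nb t := h (t, e) (by simp [List.zip_cons_cons])
      have h2 := ih hlen (fun pr hpr => h pr (by
        simp only [List.zip_cons_cons, List.mem_cons]; exact Or.inr hpr))
      omega

/-- The derivation of `⇒ F_r` using a single top rule application with tag `j`. -/
lemma exists_tF (r : TopRule) (C : List TopRule) (j : ℕ) (hj : j < C.length)
    (hget : C.get ⟨j, hj⟩ = r) :
    ∃ t : DTree, t.concl = (0, some (FOf r)) ∧ IsDeriv S C t ∧ Safe (j + 1) t ∧ nb t = 0 := by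
  -- children : premiss derivations
  obtain ⟨es, hlen, hes⟩ := exists_treeList
    (fun (m : Multiset Formula) (e : DTree) =>
      e.concl = (m, some (DOf r)) ∧ NoSys e ∧ ∀ C', IsDeriv S C' e) r.prems
    (fun m hm => exists_topPrem r m hm)
  have hmap : es.map DTree.concl = r.prems.map (fun p => (p + 0, some (DOf r))) := by
    apply map_eq_of_zip hlen
    intro pr hpr
    rw [(hes pr hpr).1]
    simp
  have hesmem : ∀ u ∈ es, NoSys u := by
    intro u hu
    obtain ⟨a, ha⟩ := exists_zip_left hlen hu
    exact (hes _ ha).2.1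
  -- the top node
  set T : DTree := DTree.node (Lab.top j) ((C.get ⟨j, hj⟩).concl + 0, some (DOf r)) es with hT
  have hTd : IsDeriv S C T := by
    apply IsDeriv.top j hj 0 (some (DOf r))
    · rw [hget]; exact hmap
    · intro u hu
      obtain ⟨a, ha⟩ := exists_zip_left hlen hu
      exact (hes _ ha).2.2 C
  have hTc : T.concl = ((r.concl : Multiset Formula) + 0, some (DOf r)) := by
    rw [hT]; show (_, _) = _; rw [hget]
  have hTsafe : Safe (j + 1) T := Safe.top rfl hesmem
  have hTnb : nb T = 0 := by
    rw [hT, nb_top]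
    exact nbL_zero (fun u hu => noSys_nb (hesmem u hu))
  -- absorb the conjunction
  obtain ⟨t1, hc1, w1⟩ := exists_absorb (S := S) C r.concl.toList 0 (some (DOf r)) T (by
    rw [hTc]; congr 1; simp)
  -- implication right
  refine ⟨DTree.node Lab.lj (0, some (FOf r)) [t1], rfl, ?_, ?_, ?_⟩
  · apply IsDeriv.lj _ (mem_single (w1.deriv hTd))
    show LJRule [t1.concl] _
    rw [hc1]
    exact LJRule.implR (conjOf r.concl.toList) (DOf r)
  · exact Safe.lj (mem_single (w1.safe _ hTsafe))
  · rw [nb_lj]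
    show nb t1 + nbL [] = 0
    have := w1.nb_le
    simp only [nbL]
    omega

end Disent
namespace Disent

variable {S : Set TwoSystem}

lemma tagsGE_children {m : ℕ} {l : Lab} {s : Sequent} {ts : List DTree}
    (h : TagsGE m (DTree.node l s ts)) : ∀ u ∈ ts, TagsGE m u := by
  cases h with | mk _ h2 => exact h2

lemma tagsGE_lab {m : ℕ} {l : Lab} {s : Sequent} {ts : List DTree}
    (h : TagsGE m (DTree.node l s ts)) : ∀ j, l = Lab.top j → m ≤ j := by
  cases h with | mk h1 _ => exact h1

lemma map_concl_nil {ts : List DTree} (h : ts.map DTree.concl = []) : ts = [] :=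
  List.map_eq_nil_iff.mp h

lemma map_concl_one {ts : List DTree} {a : Sequent} (h : ts.map DTree.concl = [a]) :
    ∃ t, ts = [t] ∧ t.concl = a := by
  cases ts with
  | nil => cases h
  | cons t ts =>
    simp only [List.map_cons, List.cons.injEq] at h
    obtain ⟨h1, h2⟩ := h
    rw [List.map_eq_nil_iff] at h2
    exact ⟨t, by rw [h2], h1⟩

lemma map_concl_two {ts : List DTree} {a b : Sequent} (h : ts.map DTree.concl = [a, b]) :
    ∃ t u, ts = [t, u] ∧ t.concl = a ∧ u.concl = b := by
  cases ts with
  | nil => cases h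
  | cons t ts =>
    simp only [List.map_cons, List.cons.injEq] at h
    obtain ⟨h1, h2⟩ := h
    obtain ⟨u, hu, hcu⟩ := map_concl_one h2
    exact ⟨t, u, by rw [hu], h1, hcu⟩

lemma nbL_one (a : DTree) : nbL [a] = nb a := by simp [nbL]

lemma nbL_pair (a b : DTree) : nbL [a, b] = nb a + nb b := by simp [nbL]

lemma node1 {C : List TopRule} {m k : ℕ} {e1 : DTree} (s' : Sequent)
    (hr : LJRule [e1.concl] s') (hd : IsDeriv S C e1) (ht : TagsGE m e1) (hnb : nb e1 ≤ k) :
    ∃ e : DTree, e.concl = s' ∧ IsDeriv S C e ∧ TagsGE m e ∧ nb e ≤ k := by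
  refine ⟨DTree.node Lab.lj s' [e1], rfl, IsDeriv.lj hr (mem_single hd),
    TagsGE.mk (fun _ h => by cases h) (mem_single ht), ?_⟩
  rw [nb_lj, nbL_one]
  exact hnb

lemma node2 {C : List TopRule} {m k : ℕ} {e1 e2 : DTree} (s' : Sequent)
    (hr : LJRule [e1.concl, e2.concl] s') (hd1 : IsDeriv S C e1) (hd2 : IsDeriv S C e2)
    (ht1 : TagsGE m e1) (ht2 : TagsGE m e2) (hnb : nb e1 + nb e2 ≤ k) :
    ∃ e : DTree, e.concl = s' ∧ IsDeriv S C e ∧ TagsGE m e ∧ nb e ≤ k := by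
  refine ⟨DTree.node Lab.lj s' [e1, e2], rfl, IsDeriv.lj hr (mem_pair hd1 hd2),
    TagsGE.mk (fun _ h => by cases h) (mem_pair ht1 ht2), ?_⟩
  rw [nb_lj, nbL_pair]
  exact hnb

/-- The disjunction-elimination cascade used to simulate a top rule application. -/
lemma exists_disjPart (r : TopRule) (j : ℕ) (Γ' : Multiset Formula) (Δ' : Option Formula)
    (C : List TopRule) :
    ∀ (P : List (Multiset Formula)) (ts : List DTree),
      ts.map DTree.concl = P.map (fun p => (p + Γ', Δ')) →
      (∀ u ∈ ts, ∃ e : DTree, e.concl = (FOf r ::ₘ u.concl.1, u.concl.2) ∧ IsDeriv S C e ∧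
        TagsGE (j + 1) e ∧ nb e ≤ nb u) →
      ∃ g : DTree,
        g.concl = (disjOf (P.map (fun a => conjOf a.toList)) ::ₘ
          (FOf r ::ₘ (r.concl + Γ')), Δ') ∧
        IsDeriv S C g ∧ TagsGE (j + 1) g ∧ nb g ≤ nbL ts := by
  intro P
  induction P with
  | nil =>
    intro ts hmap _
    have hts : ts = [] := map_concl_nil (by rw [hmap]; rfl)
    subst hts
    have hbase : IsDeriv S C (DTree.node Lab.lj ({Formula.bot}, Δ') []) :=
      IsDeriv.lj (LJRule.botL Δ') (by simp)
    obtain ⟨g, hcg, wg⟩ := exists_iw (S := S) C (FOf r ::ₘ (r.concl + Γ'))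
      (DTree.node Lab.lj ({Formula.bot}, Δ') [])
    have hns : NoSys (DTree.node Lab.lj ({Formula.bot}, Δ') []) := NoSys.mk (by simp)
    refine ⟨g, ?_, wg.deriv hbase, wg.tags _ (noSys_tagsGE hns _), ?_⟩
    · refine hcg.trans ?_
      show (FOf r ::ₘ (r.concl + Γ') + {Formula.bot}, Δ') = _
      rw [add_comm, Multiset.singleton_add]
      rfl
    · have h1 := wg.nb_le
      rw [noSys_nb hns] at h1
      have h2 : nbL ([] : List DTree) = 0 := rfl
      omega
  | cons a P ihP =>
    intro ts hmap hth
    cases ts with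
    | nil => cases hmap
    | cons t ts' =>
      simp only [List.map_cons, List.cons.injEq] at hmap
      obtain ⟨hct, hmap'⟩ := hmap
      obtain ⟨grest, hcr, hdr, htr, hnr⟩ := ihP ts' hmap'
        (fun u hu => hth u (by simp [hu]))
      obtain ⟨e, hce, hde, hte, hne⟩ := hth t (by simp)
      have hce2 : e.concl = (FOf r ::ₘ (a + Γ'), Δ') := hce.trans (by rw [hct])
      obtain ⟨e', hce', we'⟩ := exists_iw (S := S) C r.concl e
      have hce2' : e'.concl = ((a.toList : Multiset Formula)
          + (FOf r ::ₘ (r.concl + Γ')), Δ') := by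
        refine hce'.trans ?_
        rw [hce2]
        show (r.concl + (FOf r ::ₘ (a + Γ')), Δ') = _
        rw [Multiset.coe_toList, msAddCons, msAddCons, add_left_comm]
      obtain ⟨ga, hcga, wa⟩ := exists_absorb (S := S) C a.toList
        (FOf r ::ₘ (r.concl + Γ')) Δ' e' hce2'
      refine ⟨DTree.node Lab.lj
        (disjOf ((a :: P).map (fun a => conjOf a.toList)) ::ₘ (FOf r ::ₘ (r.concl + Γ')), Δ')
        [ga, grest], rfl, ?_, ?_, ?_⟩
      · apply IsDeriv.lj _ (mem_pair (wa.deriv (we'.deriv hde)) hdr)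
        show LJRule [ga.concl, grest.concl] _
        rw [hcga, hcr]
        exact LJRule.disjL (conjOf a.toList) (disjOf (P.map (fun a => conjOf a.toList)))
      · exact TagsGE.mk (fun _ h => by cases h)
          (mem_pair (wa.tags _ (we'.tags _ hte)) htr)
      · rw [nb_lj, nbL_pair]
        have h1 : nb ga ≤ nb t := le_trans wa.nb_le (le_trans we'.nb_le hne)
        show _ ≤ nb t + nbL ts'
        omega

/-- Threading children of a bottom rule application. -/
lemma thread_bot {j : ℕ} (F : Formula) (s : Sequent) (C : List TopRule) :
    ∀ (ts : List DTree) (tops : List TopRule), ts.length = tops.length →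
      (∀ p ∈ ts.zip tops, ∃ e : DTree, e.concl = (F ::ₘ s.1, s.2) ∧
        IsDeriv S (C ++ [p.2]) e ∧ TagsGE (j + 1) e ∧ nb e ≤ nb p.1) →
      ∃ es : List DTree, es.length = tops.length ∧
        (∀ u ∈ es, u.concl = (F ::ₘ s.1, s.2)) ∧
        (∀ p ∈ es.zip tops, IsDeriv S (C ++ [p.2]) p.1) ∧
        (∀ u ∈ es, TagsGE (j + 1) u) ∧ nbL es ≤ nbL ts := by
  intro ts
  induction ts with
  | nil =>
    intro tops hlen _
    exact ⟨[], hlen, fun u hu => absurd hu List.not_mem_nil,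
      fun p hp => absurd hp (by simp),
      fun u hu => absurd hu List.not_mem_nil, le_refl _⟩
  | cons t ts' ih =>
    intro tops hlen h
    cases tops with
    | nil => cases hlen
    | cons tp tops' =>
      simp only [List.length_cons, Nat.succ.injEq] at hlen
      obtain ⟨e, hce, hde, hte, hne⟩ := h (t, tp) (by simp [List.zip_cons_cons])
      have hne' : nb e ≤ nb t := hne
      obtain ⟨es', hlen', hcs', hds', hts', hns'⟩ := ih tops' hlen
        (fun p hp => h p (by simp only [List.zip_cons_cons, List.mem_cons]; exact Or.inr hp))
      refine ⟨e :: es', by simp [hlen'], ?_, ?_, ?_, ?_⟩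
      · intro u hu
        rcases List.mem_cons.mp hu with rfl | hu
        · exact hce
        · exact hcs' u hu
      · intro p hp
        rcases List.mem_cons.mp (by simpa only [List.zip_cons_cons] using hp) with h' | h'
        · rw [h']; exact hde
        · exact hds' p h'
      · intro u hu
        rcases List.mem_cons.mp hu with rfl | hu
        · exact hte
        · exact hts' u hu
      · show nb e + nbL es' ≤ nb t + nbL ts'
        omega

/-- Threading: replace all top rule applications with tag `j` (whose rule is `r`)
by uses of the hypothesis `F_r`. -/
lemma thread (r : TopRule) (j : ℕ) {C : List TopRule} {t : DTree} (hd : IsDeriv S C t) :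
    ∀ (hj : j < C.length), C.get ⟨j, hj⟩ = r → TagsGE j t →
    ∃ e : DTree, e.concl = (FOf r ::ₘ t.concl.1, t.concl.2) ∧ IsDeriv S C e ∧
      TagsGE (j + 1) e ∧ nb e ≤ nb t := by
  induction hd with
  | @lj ctx s ts hr hts ih =>
    intro hj hget htags
    have hch : ∀ u ∈ ts, TagsGE j u := tagsGE_children htags
    generalize heq : ts.map DTree.concl = ps at hr
    cases hr with
    | ax φ =>
      obtain ⟨e, hc, hn, hde⟩ := exists_ax (S := S) φ {FOf r}
      refine ⟨e, ?_, hde ctx, noSys_tagsGE hn _, by rw [noSys_nb hn]; exact Nat.zero_le _⟩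
      refine hc.trans ?_
      have hpair : φ ::ₘ ({FOf r} : Multiset Formula) = FOf r ::ₘ {φ} :=
        Multiset.cons_swap φ (FOf r) 0
      rw [hpair]
      rfl
    | botL Δ =>
      refine ⟨DTree.node Lab.lj (FOf r ::ₘ {Formula.bot}, Δ)
        [DTree.node Lab.lj ({Formula.bot}, Δ) []], rfl, ?_, ?_, ?_⟩
      · have hinner : IsDeriv S ctx (DTree.node Lab.lj ({Formula.bot}, Δ) []) := by
          apply IsDeriv.lj _ (by simp)
          exact LJRule.botL Δ
        refine IsDeriv.lj ?_ (mem_single hinner)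
        exact LJRule.iw (FOf r)
      · exact TagsGE.mk (fun _ h => by cases h)
          (mem_single (TagsGE.mk (fun _ h => by cases h) (by simp)))
      · rw [nb_lj, nbL_one, nb_lj]
        exact Nat.zero_le _
    | @disjL Γ Δ φ ψ =>
      obtain ⟨t1, t2, hts', hc1, hc2⟩ := map_concl_two heq
      subst hts'
      obtain ⟨e1, hce1, hde1, hte1, hne1⟩ := ih t1 (by simp) hj hget (hch t1 (by simp))
      obtain ⟨e2, hce2, hde2, hte2, hne2⟩ := ih t2 (by simp) hj hget (hch t2 (by simp))
      have hce1' : e1.concl = (FOf r ::ₘ (φ ::ₘ Γ), Δ) := hce1.trans (by rw [hc1])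
      have hce2' : e2.concl = (FOf r ::ₘ (ψ ::ₘ Γ), Δ) := hce2.trans (by rw [hc2])
      obtain ⟨e, hce, hde, hte, hne⟩ := node2 (m := j + 1)
        (Formula.disj φ ψ ::ₘ FOf r ::ₘ Γ, Δ)
        (by rw [hce1', hce2', Multiset.cons_swap (FOf r) φ Γ, Multiset.cons_swap (FOf r) ψ Γ]
            exact LJRule.disjL φ ψ)
        hde1 hde2 hte1 hte2 (le_refl _)
      refine ⟨e, ?_, hde, hte, ?_⟩
      · refine hce.trans ?_
        rw [Multiset.cons_swap (Formula.disj φ ψ) (FOf r) Γ]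
        rfl
      · rw [nb_lj, nbL_pair]; omega
    | @disjR1 Γ φ ψ =>
      obtain ⟨t1, hts', hc1⟩ := map_concl_one heq
      subst hts'
      obtain ⟨e1, hce1, hde1, hte1, hne1⟩ := ih t1 (by simp) hj hget (hch t1 (by simp))
      have hce1' : e1.concl = (FOf r ::ₘ Γ, some φ) := hce1.trans (by rw [hc1])
      obtain ⟨e, hce, hde, hte, hne⟩ := node1 (m := j + 1)
        (FOf r ::ₘ Γ, some (Formula.disj φ ψ))
        (by rw [hce1']; exact LJRule.disjR1 φ ψ) hde1 hte1 (le_refl _)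
      exact ⟨e, hce, hde, hte, by rw [nb_lj, nbL_one]; omega⟩
    | @disjR2 Γ φ ψ =>
      obtain ⟨t1, hts', hc1⟩ := map_concl_one heq
      subst hts'
      obtain ⟨e1, hce1, hde1, hte1, hne1⟩ := ih t1 (by simp) hj hget (hch t1 (by simp))
      have hce1' : e1.concl = (FOf r ::ₘ Γ, some ψ) := hce1.trans (by rw [hc1])
      obtain ⟨e, hce, hde, hte, hne⟩ := node1 (m := j + 1)
        (FOf r ::ₘ Γ, some (Formula.disj φ ψ))
        (by rw [hce1']; exact LJRule.disjR2 φ ψ) hde1 hte1 (le_refl _)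
      exact ⟨e, hce, hde, hte, by rw [nb_lj, nbL_one]; omega⟩
    | @conjL Γ Δ φ ψ =>
      obtain ⟨t1, hts', hc1⟩ := map_concl_one heq
      subst hts'
      obtain ⟨e1, hce1, hde1, hte1, hne1⟩ := ih t1 (by simp) hj hget (hch t1 (by simp))
      have hce1' : e1.concl = (FOf r ::ₘ (φ ::ₘ ψ ::ₘ Γ), Δ) := hce1.trans (by rw [hc1])
      obtain ⟨e, hce, hde, hte, hne⟩ := node1 (m := j + 1)
        (Formula.conj φ ψ ::ₘ FOf r ::ₘ Γ, Δ)
        (by rw [hce1', Multiset.cons_swap (FOf r) φ (ψ ::ₘ Γ),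
              Multiset.cons_swap (FOf r) ψ Γ]
            exact LJRule.conjL φ ψ) hde1 hte1 (le_refl _)
      refine ⟨e, ?_, hde, hte, by rw [nb_lj, nbL_one]; omega⟩
      refine hce.trans ?_
      rw [Multiset.cons_swap (Formula.conj φ ψ) (FOf r) Γ]
      rfl
    | @conjR Γ φ ψ =>
      obtain ⟨t1, t2, hts', hc1, hc2⟩ := map_concl_two heq
      subst hts'
      obtain ⟨e1, hce1, hde1, hte1, hne1⟩ := ih t1 (by simp) hj hget (hch t1 (by simp))
      obtain ⟨e2, hce2, hde2, hte2, hne2⟩ := ih t2 (by simp) hj hget (hch t2 (by simp))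
      have hce1' : e1.concl = (FOf r ::ₘ Γ, some φ) := hce1.trans (by rw [hc1])
      have hce2' : e2.concl = (FOf r ::ₘ Γ, some ψ) := hce2.trans (by rw [hc2])
      obtain ⟨e, hce, hde, hte, hne⟩ := node2 (m := j + 1)
        (FOf r ::ₘ Γ, some (Formula.conj φ ψ))
        (by rw [hce1', hce2']; exact LJRule.conjR φ ψ)
        hde1 hde2 hte1 hte2 (le_refl _)
      exact ⟨e, hce, hde, hte, by rw [nb_lj, nbL_pair]; omega⟩
    | @implL Γ Δ φ ψ =>
      obtain ⟨t1, t2, hts', hc1, hc2⟩ := map_concl_two heq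
      subst hts'
      obtain ⟨e1, hce1, hde1, hte1, hne1⟩ := ih t1 (by simp) hj hget (hch t1 (by simp))
      obtain ⟨e2, hce2, hde2, hte2, hne2⟩ := ih t2 (by simp) hj hget (hch t2 (by simp))
      have hce1' : e1.concl = (FOf r ::ₘ Γ, some φ) := hce1.trans (by rw [hc1])
      have hce2' : e2.concl = (FOf r ::ₘ (ψ ::ₘ Γ), Δ) := hce2.trans (by rw [hc2])
      obtain ⟨e, hce, hde, hte, hne⟩ := node2 (m := j + 1)
        (Formula.impl φ ψ ::ₘ FOf r ::ₘ Γ, Δ)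
        (by rw [hce1', hce2', Multiset.cons_swap (FOf r) ψ Γ]
            exact LJRule.implL φ ψ)
        hde1 hde2 hte1 hte2 (le_refl _)
      refine ⟨e, ?_, hde, hte, by rw [nb_lj, nbL_pair]; omega⟩
      refine hce.trans ?_
      rw [Multiset.cons_swap (Formula.impl φ ψ) (FOf r) Γ]
      rfl
    | @implR Γ φ ψ =>
      obtain ⟨t1, hts', hc1⟩ := map_concl_one heq
      subst hts'
      obtain ⟨e1, hce1, hde1, hte1, hne1⟩ := ih t1 (by simp) hj hget (hch t1 (by simp))
      have hce1' : e1.concl = (FOf r ::ₘ (φ ::ₘ Γ), some ψ) := hce1.trans (by rw [hc1])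
      obtain ⟨e, hce, hde, hte, hne⟩ := node1 (m := j + 1)
        (FOf r ::ₘ Γ, some (Formula.impl φ ψ))
        (by rw [hce1', Multiset.cons_swap (FOf r) φ Γ]; exact LJRule.implR φ ψ)
        hde1 hte1 (le_refl _)
      exact ⟨e, hce, hde, hte, by rw [nb_lj, nbL_one]; omega⟩
    | @iw Γ Δ φ =>
      obtain ⟨t1, hts', hc1⟩ := map_concl_one heq
      subst hts'
      obtain ⟨e1, hce1, hde1, hte1, hne1⟩ := ih t1 (by simp) hj hget (hch t1 (by simp))
      have hce1' : e1.concl = (FOf r ::ₘ Γ, Δ) := hce1.trans (by rw [hc1])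
      obtain ⟨e, hce, hde, hte, hne⟩ := node1 (m := j + 1)
        (φ ::ₘ FOf r ::ₘ Γ, Δ)
        (by rw [hce1']; exact LJRule.iw φ) hde1 hte1 (le_refl _)
      refine ⟨e, ?_, hde, hte, by rw [nb_lj, nbL_one]; omega⟩
      refine hce.trans ?_
      rw [Multiset.cons_swap φ (FOf r) Γ]
      rfl
    | @ic Γ Δ φ =>
      obtain ⟨t1, hts', hc1⟩ := map_concl_one heq
      subst hts'
      obtain ⟨e1, hce1, hde1, hte1, hne1⟩ := ih t1 (by simp) hj hget (hch t1 (by simp))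
      have hce1' : e1.concl = (FOf r ::ₘ (φ ::ₘ φ ::ₘ Γ), Δ) := hce1.trans (by rw [hc1])
      obtain ⟨e, hce, hde, hte, hne⟩ := node1 (m := j + 1)
        (φ ::ₘ FOf r ::ₘ Γ, Δ)
        (by rw [hce1', Multiset.cons_swap (FOf r) φ (φ ::ₘ Γ),
              Multiset.cons_swap (FOf r) φ Γ]
            exact LJRule.ic φ) hde1 hte1 (le_refl _)
      refine ⟨e, ?_, hde, hte, by rw [nb_lj, nbL_one]; omega⟩
      refine hce.trans ?_
      rw [Multiset.cons_swap φ (FOf r) Γ]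
      rfl
    | @cut Γ Γ' Δ φ =>
      obtain ⟨t1, t2, hts', hc1, hc2⟩ := map_concl_two heq
      subst hts'
      obtain ⟨e1, hce1, hde1, hte1, hne1⟩ := ih t1 (by simp) hj hget (hch t1 (by simp))
      obtain ⟨e2, hce2, hde2, hte2, hne2⟩ := ih t2 (by simp) hj hget (hch t2 (by simp))
      have hce1' : e1.concl = (FOf r ::ₘ Γ, some φ) := hce1.trans (by rw [hc1])
      have hce2' : e2.concl = (FOf r ::ₘ (φ ::ₘ Γ'), Δ) := hce2.trans (by rw [hc2])
      obtain ⟨e', hce', hde', hte', hne'⟩ := node2 (m := j + 1)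
        ((FOf r ::ₘ Γ) + (FOf r ::ₘ Γ'), Δ)
        (by rw [hce1', hce2', Multiset.cons_swap (FOf r) φ Γ']
            exact LJRule.cut φ)
        hde1 hde2 hte1 hte2 (le_refl _)
      obtain ⟨e, hce, hde, hte, hne⟩ := node1 (m := j + 1) (k := nb e1 + nb e2)
        (FOf r ::ₘ (Γ + Γ'), Δ)
        (by rw [hce']
            rw [show (FOf r ::ₘ Γ) + (FOf r ::ₘ Γ') = FOf r ::ₘ FOf r ::ₘ (Γ + Γ') by
              rw [msAddCons, Multiset.cons_add]]
            exact LJRule.ic (FOf r)) hde' hte' hne'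
      exact ⟨e, hce, hde, hte, by rw [nb_lj, nbL_pair]; omega⟩
  | @top ctx j' hj' Γ' Δ' ts hmap hts ih =>
    intro hj hget htags
    by_cases hjj : j' = j
    · subst hjj
      have hgr : ctx.get ⟨j', hj'⟩ = r := hget
      rw [hgr] at hmap
      obtain ⟨g, hcg, hdg, htg, hng⟩ := exists_disjPart r j' Γ' Δ' ctx r.prems ts hmap
        (fun u hu => ih u hu hj hget (tagsGE_children htags u hu))
      obtain ⟨cI, hcI, hnI, hdI⟩ := exists_conjIntro (S := S) r.concl.toList (FOf r ::ₘ Γ')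
      have hcI' : cI.concl = (FOf r ::ₘ (r.concl + Γ'), some (conjOf r.concl.toList)) := by
        refine hcI.trans ?_
        rw [Multiset.coe_toList, msAddCons]
      obtain ⟨eI, hceI, hdeI, hteI, hneI⟩ := node2 (m := j' + 1) (k := nbL ts)
        (FOf r ::ₘ FOf r ::ₘ (r.concl + Γ'), Δ')
        (by rw [hcI', hcg]
            exact LJRule.implL (conjOf r.concl.toList) (DOf r))
        (hdI ctx) hdg (noSys_tagsGE hnI _) htg
        (by rw [noSys_nb hnI]; omega)
      obtain ⟨e, hce, hde, hte, hne⟩ := node1 (m := j' + 1) (k := nbL ts)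
        (FOf r ::ₘ (r.concl + Γ'), Δ')
        (by rw [hceI]; exact LJRule.ic (FOf r)) hdeI hteI hneI
      refine ⟨e, ?_, hde, hte, by rw [nb_top]; exact hne⟩
      refine hce.trans ?_
      rw [hgr]
      rfl
    · have hjlt : j + 1 ≤ j' := by
        have := tagsGE_lab htags j' rfl
        omega
      obtain ⟨es, hlen, hes⟩ := exists_treeList
        (fun (u : DTree) (e : DTree) => e.concl = (FOf r ::ₘ u.concl.1, u.concl.2) ∧
          IsDeriv S ctx e ∧ TagsGE (j + 1) e ∧ nb e ≤ nb u) ts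
        (fun u hu => ih u hu hj hget (tagsGE_children htags u hu))
      have hmap' : es.map DTree.concl
          = (ctx.get ⟨j', hj'⟩).prems.map (fun p => (p + (FOf r ::ₘ Γ'), Δ')) := by
        have h1 : es.map DTree.concl
            = ts.map (fun u => (FOf r ::ₘ u.concl.1, u.concl.2)) := by
          apply map_eq_of_zip (by rw [hlen])
          intro pr hpr
          exact (hes pr hpr).1
        rw [h1]
        rw [show ts.map (fun u => (FOf r ::ₘ u.concl.1, u.concl.2))
            = (ts.map DTree.concl).map (fun c => (FOf r ::ₘ c.1, c.2)) by
          rw [List.map_map]; rfl]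
        rw [hmap, List.map_map]
        apply List.map_congr_left
        intro a _
        show (FOf r ::ₘ (a + Γ'), Δ') = (a + (FOf r ::ₘ Γ'), Δ')
        rw [msAddCons]
      refine ⟨DTree.node (Lab.top j')
        ((ctx.get ⟨j', hj'⟩).concl + (FOf r ::ₘ Γ'), Δ') es, ?_, ?_, ?_, ?_⟩
      · show ((ctx.get ⟨j', hj'⟩).concl + (FOf r ::ₘ Γ'), Δ')
            = (FOf r ::ₘ ((ctx.get ⟨j', hj'⟩).concl + Γ'), Δ')
        rw [msAddCons]
      · exact IsDeriv.top j' hj' (FOf r ::ₘ Γ') Δ' hmap' (fun u hu => by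
          obtain ⟨a, ha⟩ := exists_zip_left (l := ts) (by rw [hlen]) hu
          exact (hes _ ha).2.1)
      · apply TagsGE.mk
        · intro j'' h
          injection h with h'
          omega
        · intro u hu
          obtain ⟨a, ha⟩ := exists_zip_left (l := ts) (by rw [hlen]) hu
          exact (hes _ ha).2.2.1
      · rw [nb_top, nb_top]
        apply nbL_le_of_zip (by rw [hlen])
        intro pr hpr
        exact (hes pr hpr).2.2.2
  | @bot ctx sys hsys s ts hlen hcon hts ih =>
    intro hj hget htags
    obtain ⟨es, hlen', hcs, hds, htgs, hnbs⟩ := thread_bot (S := S) (j := j) (FOf r) s ctx ts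
      sys.tops hlen
      (fun p hp => by
        have hmem : p.1 ∈ ts := (List.of_mem_zip hp).1
        have hj2 : j < (ctx ++ [p.2]).length := by
          rw [List.length_append]
          omega
        have hget2 : (ctx ++ [p.2]).get ⟨j, hj2⟩ = r := by
          simpa [List.getElem_append_left hj] using hget
        obtain ⟨e, hce, hde, hte, hne⟩ := ih p hp hj2 hget2 (tagsGE_children htags _ hmem)
        exact ⟨e, by rw [hce, hcon p.1 hmem], hde, hte, hne⟩)
    refine ⟨DTree.node (Lab.bot sys) (FOf r ::ₘ s.1, s.2) es, rfl, ?_, ?_, ?_⟩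
    · exact IsDeriv.bot sys hsys hlen' hcs hds
    · exact TagsGE.mk (fun _ h => by cases h) htgs
    · rw [nb_bot, nb_bot]
      omega

end Disent
namespace Disent

variable {S : Set TwoSystem}

lemma tags0 : ∀ (n : ℕ) (t : DTree), sz t ≤ n → TagsGE 0 t := by
  intro n
  induction n with
  | zero =>
    intro t h
    cases t with
    | node l s ts => rw [sz_node] at h; omega
  | succ n ih =>
    intro t h
    cases t with
    | node l s ts =>
      refine TagsGE.mk (fun j _ => Nat.zero_le j) (fun u hu => ih u ?_)
      rw [sz_node] at h
      have := szL_mem hu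
      omega

lemma main_bot {C : List TopRule} (s : Sequent) :
    ∀ (ts : List DTree) (tops : List TopRule), ts.length = tops.length →
      (∀ p ∈ ts.zip tops, ∃ c : DTree, c.concl = s ∧ IsDeriv S (C ++ [p.2]) c ∧
        Safe (C.length + 1) c) →
      ∃ cs : List DTree, cs.length = tops.length ∧ (∀ u ∈ cs, u.concl = s) ∧
        (∀ p ∈ cs.zip tops, IsDeriv S (C ++ [p.2]) p.1) ∧
        (∀ u ∈ cs, Safe (C.length + 1) u) := by
  intro ts
  induction ts with
  | nil =>
    intro tops hlen _
    exact ⟨[], hlen, fun u hu => absurd hu List.not_mem_nil,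
      fun p hp => absurd hp (by simp),
      fun u hu => absurd hu List.not_mem_nil⟩
  | cons t ts' ih =>
    intro tops hlen h
    cases tops with
    | nil => cases hlen
    | cons tp tops' =>
      simp only [List.length_cons, Nat.succ.injEq] at hlen
      obtain ⟨c, hcc, hdc, hsc⟩ := h (t, tp) (by simp [List.zip_cons_cons])
      obtain ⟨cs', hlen', hcs', hds', hss'⟩ := ih tops' hlen
        (fun p hp => h p (by simp only [List.zip_cons_cons, List.mem_cons]; exact Or.inr hp))
      refine ⟨c :: cs', by simp [hlen'], ?_, ?_, ?_⟩
      · intro u hu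
        rcases List.mem_cons.mp hu with rfl | hu
        · exact hcc
        · exact hcs' u hu
      · intro p hp
        rcases List.mem_cons.mp (by simpa only [List.zip_cons_cons] using hp) with h' | h'
        · rw [h']; exact hdc
        · exact hds' p h'
      · intro u hu
        rcases List.mem_cons.mp hu with rfl | hu
        · exact hsc
        · exact hss' u hu

lemma main : ∀ (B : ℕ), ∀ (szb : ℕ), ∀ (C : List TopRule) (t : DTree), nb t ≤ B →
    sz t ≤ szb → IsDeriv S C t → TagsGE C.length t →
    ∃ t' : DTree, IsDeriv S C t' ∧ t'.concl = t.concl ∧ Safe C.length t' := by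
  intro B
  induction B using Nat.strong_induction_on with
  | _ B ihB =>
    intro szb
    induction szb using Nat.strong_induction_on with
    | _ szb ihS =>
      intro C t hnb hsz hd htags
      cases hd with
      | @lj _ s ts hr hts =>
        have hch : ∀ u ∈ ts, TagsGE C.length u := tagsGE_children htags
        have hszb : 1 ≤ szb := by
          have := sz_node Lab.lj s ts
          omega
        obtain ⟨es, hlen, hes⟩ := exists_treeList
          (fun (u : DTree) (e : DTree) => IsDeriv S C e ∧ e.concl = u.concl ∧
            Safe C.length e) ts
          (fun u hu => by
            have hsu : sz u ≤ szb - 1 := by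
              have h1 := szL_mem hu
              have h2 := sz_node Lab.lj s ts
              omega
            have hnu : nb u ≤ B := by
              have h1 := nbL_mem hu
              have h2 := nb_lj s ts
              omega
            exact ihS (szb - 1) (by omega) C u hnu hsu (hts u hu) (hch u hu))
        refine ⟨DTree.node Lab.lj s es, ?_, rfl, ?_⟩
        · apply IsDeriv.lj _ (fun u hu => by
            obtain ⟨a, ha⟩ := exists_zip_left (l := ts) (by rw [hlen]) hu
            exact (hes _ ha).1)
          have hmape : es.map DTree.concl = ts.map DTree.concl := by
            apply map_eq_of_zip (by rw [hlen])
            intro pr hpr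
            exact (hes pr hpr).2.1
          rw [hmape]
          exact hr
        · apply Safe.lj
          intro u hu
          obtain ⟨a, ha⟩ := exists_zip_left (l := ts) (by rw [hlen]) hu
          exact (hes _ ha).2.2
      | @top _ j hj Γ' Δ' ts hmap hts =>
        exfalso
        have := tagsGE_lab htags j rfl
        omega
      | @bot _ sys hsys s ts hlen hcon hts =>
        have hB : 1 ≤ B := by
          have h9 : nb (DTree.node (Lab.bot sys) s ts) = 1 + nbL ts := nb_bot sys s ts
          omega
        obtain ⟨cs, hlen', hcs, hds, hss⟩ := main_bot (S := S) (C := C) s ts sys.tops hlen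
          (fun p hp => by
            have hmem : p.1 ∈ ts := (List.of_mem_zip hp).1
            have hj2 : C.length < (C ++ [p.2]).length := by
              simp
            have hget2 : (C ++ [p.2]).get ⟨C.length, hj2⟩ = p.2 := by
              simp
            -- thread away the new top rule
            obtain ⟨e, hce, hde, hte, hne⟩ := thread p.2 C.length (hts p hp) hj2 hget2
              (by
                have h1 := tagsGE_children htags p.1 hmem
                exact h1)
            -- recursively normalise
            have hnbe : nb e ≤ B - 1 := by
              have h1 := hne
              have h2 : nb p.1 ≤ nbL ts := nbL_mem hmem
              have h3 := nb_bot sys s ts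
              omega
            obtain ⟨e', hde', hce', hse'⟩ := ihB (B - 1) (by omega) (sz e) (C ++ [p.2]) e
              hnbe (le_refl _) hde (by
                have h1 : (C ++ [p.2]).length = C.length + 1 := by simp
                rw [h1]
                exact hte)
            -- the F-derivation with its single top rule application
            obtain ⟨tf, hctf, hdtf, hstf, _⟩ := exists_tF (S := S) p.2 (C ++ [p.2]) C.length
              hj2 hget2
            -- cut
            refine ⟨DTree.node Lab.lj s [tf, e'], rfl, ?_, ?_⟩
            · apply IsDeriv.lj _ (mem_pair hdtf hde')
              show LJRule [tf.concl, e'.concl] s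
              rw [hctf, hce', hce, hcon p.1 hmem]
              have hcut := LJRule.cut (Γ := 0) (Γ' := s.1) (Δ := s.2) (FOf p.2)
              rw [zero_add] at hcut
              exact hcut
            · apply Safe.lj
              apply mem_pair
              · exact hstf
              · have h1 : (C ++ [p.2]).length = C.length + 1 := by
                  simp
                rw [h1] at hse'
                exact hse')
        refine ⟨DTree.node (Lab.bot sys) s cs, ?_, rfl, ?_⟩
        · exact IsDeriv.bot sys hsys hlen' hcs hds
        · exact Safe.bot hss

end Disent

/-- Lemma (disentanglement): any 2-system derivation 𝒫 can be transformed
into a 2-system derivation 𝒫' of the same end-sequent in which no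
entanglement occurs. -/
theorem disentanglement (S : Set TwoSystem) (t : DTree) (h : IsDeriv S [] t) :
    ∃ t' : DTree, IsDeriv S [] t' ∧ t'.concl = t.concl ∧
      ∀ q₁ q₂ : List ℕ, ¬ Entangled t' q₁ q₂ := by
  obtain ⟨t', hd', hc', hs'⟩ := Disent.main (S := S) (Disent.nb t) (Disent.sz t) [] t
    (le_refl _) (le_refl _) h (Disent.tags0 (Disent.sz t) t (le_refl _))
  exact ⟨t', hd', hc', fun q₁ q₂ => Disent.safe_not_entangled hs' q₁ q₂⟩
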